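/- arXiv:2203.00670 — 3 statements merged into one kernel-verified Lean document; each statement's English description precedes it below -/
import Mathlib

section
/- Fix a prime p. Let R be the graded polynomial algebra over a field with exactly one generator in each degree p^i for i ≥ 0, so the dimension of R in degree n equals the number of partitions of n into powers of p. Then the logarithm of dim R_n equals (1/(2 log p)) (log n)^2 + O(log log n · log n). -/
/-- The number of partitions of `n` into powers of the prime `p`, i.e. the dimension in
degree `n` of a graded polynomial algebra with one generator in each degree `p^i`. -/
noncomputable def pPowerPartitions (p n : ℕ) : ℕ :=
  Nat.card {P : n.Partition // ∀ i ∈ P.parts, ∃ k : ℕ, i = p ^ k}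

/-!
Let `K = ⌊log_p n⌋`. A `p`-power partition of `n` is determined by the multiplicities of the
parts `p^i`, `i ≤ K`, and `p^i` occurs at most `n / p^i` times; this bounds the count above by
`∏_{i ≤ K} (n / p^i + 1)`. Conversely, any choice of at most `n / (K p^i)` copies of each `p^i`,
`1 ≤ i ≤ K`, padded with ones, is a partition of `n`. The logarithms of both products equal
`K log n - log p · K (K + 1) / 2` up to `O(K log K + log n)`, and since
`K log p ≤ log n < (K + 1) log p` this main term is `(log n)^2 / (2 log p) + O(log n)`.
-/

open Finset Real

namespace Nat.Partition

theorem count_mul_le {n : ℕ} (P : n.Partition) (a : ℕ) : P.parts.count a * a ≤ n := by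
  calc P.parts.count a * a = (P.parts.filter (a = ·)).sum := by
        rw [Multiset.filter_eq, Multiset.sum_replicate, smul_eq_mul]
    _ ≤ (P.parts.filter (a = ·)).sum + (P.parts.filter (¬ a = ·)).sum := Nat.le_add_right _ _
    _ = n := by rw [← Multiset.sum_add, Multiset.filter_add_not, P.parts_sum]

theorem count_le_div {n : ℕ} (P : n.Partition) (a : ℕ) : P.parts.count a ≤ n / a := by
  rcases a.eq_zero_or_pos with rfl | ha
  · simpa using fun h => (P.parts_pos h).ne' rfl
  · exact (Nat.le_div_iff_mul_le ha).mpr (P.count_mul_le a)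

end Nat.Partition

theorem card_partitions_with_parts_in_le_prod (n : ℕ) (s : Finset ℕ) :
    Nat.card {P : n.Partition // ∀ x ∈ P.parts, x ∈ s} ≤ ∏ a ∈ s, (n / a + 1) := by
  calc _ ≤ Nat.card (∀ a : s, Fin (n / a + 1)) := Nat.card_le_card_of_injective
        (fun P a => ⟨P.1.parts.count ↑a, Nat.lt_succ_of_le (P.1.count_le_div a)⟩) fun P Q h => ?_
    _ = _ := by simpa using prod_attach s fun a => n / a + 1
  refine Subtype.ext <| Nat.Partition.ext <| Multiset.ext.mpr fun x => ?_
  by_cases hx : x ∈ s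
  · exact congrArg Fin.val (congrFun h ⟨x, hx⟩)
  · rw [Multiset.count_eq_zero.mpr (hx ∘ P.2 x), Multiset.count_eq_zero.mpr (hx ∘ Q.2 x)]

theorem prod_le_card_partitions_with_parts_in {ι : Type*} [Fintype ι] {n : ℕ} {S : Set ℕ}
    (a m : ι → ℕ) (ha : Function.Injective a) (ha1 : ∀ i, 1 < a i) (haS : ∀ i, a i ∈ S)
    (h1S : 1 ∈ S) (hm : ∑ i, m i * a i ≤ n) :
    ∏ i, (m i + 1) ≤ Nat.card {P : n.Partition // ∀ x ∈ P.parts, x ∈ S} := by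
  classical
  set l : (∀ i, Fin (m i + 1)) → Multiset ℕ := fun k =>
    ∑ i, Multiset.replicate (k i) (a i) + Multiset.replicate (n - ∑ i, k i * a i) 1
  have hsum (k : ∀ i, Fin (m i + 1)) : (l k).sum = n := by
    have : ∑ i, (k i : ℕ) * a i ≤ n :=
      (sum_le_sum fun i _ => Nat.mul_le_mul_right _ (Nat.lt_succ_iff.mp (k i).2)).trans hm
    simp only [l, Multiset.sum_add, Multiset.sum_sum, Multiset.sum_replicate, smul_eq_mul, mul_one]
    omega
  have hcount (k : ∀ i, Fin (m i + 1)) (j : ι) : (l k).count (a j) = k j := by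
    simp only [l, Multiset.count_add, Multiset.count_sum', Multiset.count_replicate, ha.eq_iff,
      if_neg (ha1 j).ne, add_zero]
    simp
  have hmem (k : ∀ i, Fin (m i + 1)) : ∀ x ∈ l k, x ∈ S := by
    simp only [l, Multiset.mem_add, Multiset.mem_sum, Multiset.mem_replicate]
    rintro x (⟨i, -, -, rfl⟩ | ⟨-, rfl⟩)
    exacts [haS i, h1S]
  calc _ = Nat.card (∀ i, Fin (m i + 1)) := by simp
    _ ≤ _ := Nat.card_le_card_of_injective
      (fun k => ⟨.ofSums n (l k) (hsum k), fun x hx => hmem k x (Multiset.mem_of_mem_filter hx)⟩)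
      fun k k' h => funext fun j => Fin.ext ?_
  have := congrArg (fun P => P.1.parts.count (a j)) h
  simp only [Nat.Partition.count_ofSums_of_ne_zero _ (ha1 j).ne_bot, hcount] at this
  exact this

theorem pPowerPartitions_le_prod {p : ℕ} (hp : 1 < p) (n : ℕ) :
    pPowerPartitions p n ≤ ∏ i ∈ range (Nat.log p n + 1), (n / p ^ i + 1) := by
  calc pPowerPartitions p n
      ≤ Nat.card {P : n.Partition //
          ∀ x ∈ P.parts, x ∈ (range (Nat.log p n + 1)).image (p ^ ·)} := by
        refine Nat.card_le_card_of_injective _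
          (Subtype.impEmbedding _ _ fun P hP x hx => ?_).injective
        obtain ⟨k, rfl⟩ := hP x hx
        exact mem_image_of_mem _ <| mem_range_succ_iff.mpr <|
          Nat.le_log_of_pow_le hp (Nat.Partition.le_of_mem_parts hx)
    _ ≤ _ := card_partitions_with_parts_in_le_prod n _
    _ = _ := prod_image fun i _ j _ h => Nat.pow_right_injective hp h

theorem prod_le_pPowerPartitions {p : ℕ} (hp : 1 < p) (n K : ℕ) :
    ∏ i ∈ range K, (n / (K * p ^ (i + 1)) + 1) ≤ pPowerPartitions p n := by
  rw [← Fin.prod_univ_eq_prod_range (fun i => n / (K * p ^ (i + 1)) + 1)]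
  refine prod_le_card_partitions_with_parts_in (fun i : Fin K => p ^ ((i : ℕ) + 1)) _
    (fun i j h => Fin.ext (by simpa using Nat.pow_right_injective hp h))
    (fun i => Nat.one_lt_pow (Nat.succ_ne_zero i) hp) (fun i => ⟨_, rfl⟩) ⟨0, (pow_zero p).symm⟩ ?_
  calc ∑ i : Fin K, n / (K * p ^ ((i : ℕ) + 1)) * p ^ ((i : ℕ) + 1)
      ≤ ∑ _i : Fin K, n / K := sum_le_sum fun i _ => by
        rw [← Nat.div_div_eq_div_mul]; exact Nat.div_mul_le_self _ _
    _ = K * (n / K) := by simp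
    _ ≤ n := Nat.mul_div_le n K

theorem log_mul_natLog_le_log {b : ℕ} (hb : 1 < b) (n : ℕ) : log b * Nat.log b n ≤ log n := by
  have hb' : 0 < log b := log_pos (by exact_mod_cast hb)
  calc log b * Nat.log b n ≤ log b * logb b n := by gcongr; exact natLog_le_logb n b
    _ = log n := mul_div_cancel₀ _ hb'.ne'

theorem log_lt_log_mul_natLog_add_one {b : ℕ} (hb : 1 < b) (n : ℕ) :
    log n < log b * (Nat.log b n + 1) := by
  have hb' : 0 < log b := log_pos (by exact_mod_cast hb)
  calc log n = log b * logb b n := (mul_div_cancel₀ _ hb'.ne').symm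
    _ < log b * (Nat.log b n + 1) := by
      gcongr; simpa [natFloor_logb_natCast] using Nat.lt_floor_add_one (logb b n)

theorem sum_range_natCast_add_one (K : ℕ) : ∑ i ∈ range K, ((i : ℝ) + 1) = K * (K + 1) / 2 := by
  induction K with
  | zero => simp
  | succ K ih => rw [sum_range_succ, ih]; push_cast; ring

theorem pPowerPartitions_pos {p : ℕ} (hp : 1 < p) (n : ℕ) : 0 < pPowerPartitions p n := by
  simpa [Nat.one_le_iff_ne_zero, Nat.pos_iff_ne_zero] using prod_le_pPowerPartitions hp n 0

theorem log_pPowerPartitions_le {p n : ℕ} (hp : 1 < p) (hn : n ≠ 0) :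
    log (pPowerPartitions p n) ≤
      (Nat.log p n + 1) * (log 2 + log n) - log p * (Nat.log p n * (Nat.log p n + 1)) / 2 := by
  set K := Nat.log p n
  have hterm (i : ℕ) (hi : i ∈ range (K + 1)) :
      log ((n / p ^ i + 1 : ℕ) : ℝ) ≤ log 2 + log n - i * log p := by
    have hpi : (p : ℝ) ^ i ≤ n := by
      exact_mod_cast (Nat.pow_le_pow_right hp.le (mem_range_succ_iff.mp hi)).trans
        (Nat.pow_log_le_self p hn)
    have hp0 : (0 : ℝ) < p ^ i := by positivity
    calc log ((n / p ^ i + 1 : ℕ) : ℝ) ≤ log (2 * (n / p ^ i)) := by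
          have hdiv := Nat.cast_div_le (α := ℝ) (m := n) (n := p ^ i)
          push_cast at hdiv ⊢
          gcongr
          linarith [(one_le_div hp0).mpr hpi]
      _ = log 2 + log n - i * log p := by
          rw [log_mul two_ne_zero (by positivity), log_div (by positivity) hp0.ne', log_pow]
          ring
  calc log (pPowerPartitions p n) ≤ log (∏ i ∈ range (K + 1), (n / p ^ i + 1) : ℕ) := by
        gcongr
        · exact_mod_cast pPowerPartitions_pos hp n
        · exact pPowerPartitions_le_prod hp n
    _ = ∑ i ∈ range (K + 1), log ((n / p ^ i + 1 : ℕ) : ℝ) := by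
        rw [Nat.cast_prod, log_prod fun i _ => by positivity]
    _ ≤ ∑ i ∈ range (K + 1), (log 2 + log n - i * log p) := sum_le_sum hterm
    _ = _ := by
        rw [sum_range_succ']
        simp only [Nat.cast_add, Nat.cast_one, sum_sub_distrib, sum_const, card_range,
          nsmul_eq_mul, ← sum_mul, sum_range_natCast_add_one, CharP.cast_eq_zero, zero_mul]
        ring

theorem le_log_pPowerPartitions {p n : ℕ} (hp : 1 < p) (hn : n ≠ 0) (K : ℕ) :
    K * (log n - log K) - log p * (K * (K + 1)) / 2 ≤ log (pPowerPartitions p n) := by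
  have hterm (i : ℕ) (hi : i ∈ range K) :
      log n - log K - (i + 1) * log p ≤ log ((n / (K * p ^ (i + 1)) + 1 : ℕ) : ℝ) := by
    have hK : 0 < K := Nat.zero_lt_of_lt (mem_range.mp hi)
    have hd : (0 : ℝ) < K * p ^ (i + 1) := by positivity
    calc log n - log K - (i + 1) * log p = log (n / (K * p ^ (i + 1))) := by
          rw [log_div (by positivity) hd.ne', log_mul (by positivity) (by positivity), log_pow]
          push_cast
          ring
      _ ≤ _ := by
          gcongr
          have := Nat.lt_floor_add_one ((n : ℝ) / (K * p ^ (i + 1)))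
          rw [← Nat.cast_pow, ← Nat.cast_mul, Nat.floor_div_eq_div] at this
          push_cast at this ⊢
          exact this.le
  calc K * (log n - log K) - log p * (K * (K + 1)) / 2
      = ∑ i ∈ range K, (log n - log K - (i + 1) * log p) := by
        simp only [sum_sub_distrib, sum_const, card_range, nsmul_eq_mul, ← sum_mul,
          sum_range_natCast_add_one]
        ring
    _ ≤ ∑ i ∈ range K, log ((n / (K * p ^ (i + 1)) + 1 : ℕ) : ℝ) := sum_le_sum hterm
    _ = log (∏ i ∈ range K, (n / (K * p ^ (i + 1)) + 1) : ℕ) := by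
        rw [Nat.cast_prod, log_prod fun i _ => by positivity]
    _ ≤ log (pPowerPartitions p n) := by
        gcongr
        exact prod_le_pPowerPartitions hp n K

theorem sq_div_two_mul_sub_mem_Icc {q K L : ℝ} (hq : 0 < q) (hK : 0 ≤ K) (hKL : q * K ≤ L)
    (hLK : L ≤ q * (K + 1)) :
    L ^ 2 / (2 * q) - (K * L - q * (K * (K + 1)) / 2) ∈ Set.Icc 0 (q * (K + 1) / 2) := by
  have hid : L ^ 2 / (2 * q) - (K * L - q * (K * (K + 1)) / 2) =
      ((L - q * K) ^ 2 + q ^ 2 * K) / (2 * q) := by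
    field_simp
    ring
  rw [hid]
  refine ⟨by positivity, ?_⟩
  rw [div_le_iff₀ (by positivity)]
  nlinarith

theorem abs_log_pPowerPartitions_sub_le {p n : ℕ} (hp : 1 < p) (hn : n ≠ 0) :
    |log (pPowerPartitions p n) - log n ^ 2 / (2 * log p)| ≤
      (Nat.log p n + 1) * (log 2 + log p / 2) + log n + Nat.log p n * log (Nat.log p n) := by
  have hup := log_pPowerPartitions_le hp hn
  have hdown := le_log_pPowerPartitions hp hn (Nat.log p n)
  set K := Nat.log p n
  obtain ⟨hlo, hhi⟩ := sq_div_two_mul_sub_mem_Icc (log_pos (by exact_mod_cast hp)) K.cast_nonneg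
    (log_mul_natLog_le_log hp n) (log_lt_log_mul_natLog_add_one hp n).le
  have hKlog2 : 0 ≤ ((K : ℝ) + 1) * log 2 := by positivity
  have hKlogK : 0 ≤ (K : ℝ) * log K := mul_nonneg K.cast_nonneg (log_natCast_nonneg K)
  have hL : 0 ≤ log (n : ℝ) := log_natCast_nonneg n
  rw [abs_le]
  constructor <;> linarith

theorem le_two_mul_max_one_log_mul_self {x : ℝ} (hx : 0 < x) : x ≤ 2 * max 1 (log x * x) := by
  have : x - 1 ≤ log x * x := by
    calc x - 1 = (1 - x⁻¹) * x := by field_simp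
      _ ≤ log x * x := by gcongr; exact one_sub_inv_le_log_of_pos hx
  linarith [le_max_left 1 (log x * x), le_max_right 1 (log x * x)]

theorem natCast_mul_log_le {q L : ℝ} {K : ℕ} (hq : 0 < q) (hL : 0 < L) (hKL : q * K ≤ L) :
    K * log K ≤ (1 + 2 * |log q|) / q * max 1 (log L * L) := by
  set M := max 1 (log L * L)
  rcases K.eq_zero_or_pos with rfl | hK
  · simp only [CharP.cast_eq_zero, zero_mul]
    positivity
  have hLM := le_two_mul_max_one_log_mul_self hL
  calc K * log K ≤ L / q * log (L / q) := by
        have hKx : (K : ℝ) ≤ L / q := by rw [le_div_iff₀ hq]; linarith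
        gcongr
    _ = (log L * L - L * log q) / q := by rw [log_div hL.ne' hq.ne']; ring
    _ ≤ (M + 2 * M * |log q|) / q := by
        gcongr
        have hlogq : -(L * log q) ≤ 2 * M * |log q| :=
          calc -(L * log q) ≤ L * |log q| := by rw [← mul_neg]; gcongr; exact neg_le_abs _
            _ ≤ 2 * M * |log q| := by gcongr
        linarith [le_max_right 1 (log L * L)]
    _ = _ := by ring

/-- `log (dim R_n) = (1/(2 log p)) (log n)^2 + O(log log n · log n)`. -/
theorem stmt4 (p : ℕ) (hp : p.Prime) : ∃ C : ℝ, ∀ n : ℕ, 2 ≤ n →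
    |Real.log (pPowerPartitions p n) - (Real.log n) ^ 2 / (2 * Real.log p)| ≤
      C * max 1 (Real.log (Real.log n) * Real.log n) := by
  have hp1 := hp.one_lt
  set q := log p
  have hq : 0 < q := log_pos (by exact_mod_cast hp1)
  refine ⟨(2 / q + 1) * (log 2 + q / 2) + 2 + (1 + 2 * |log q|) / q, fun n hn => ?_⟩
  set K := Nat.log p n
  set L := log n
  set M := max 1 (log L * L)
  have hL : 0 < L := log_pos (by exact_mod_cast hn)
  have hKL : q * K ≤ L := log_mul_natLog_le_log hp1 n
  have hLM : L ≤ 2 * M := le_two_mul_max_one_log_mul_self hL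
  have hK : ((K : ℝ) + 1) * (log 2 + q / 2) ≤ (2 / q + 1) * M * (log 2 + q / 2) := by
    have hKM : (K : ℝ) ≤ 2 / q * M := by
      rw [div_mul_eq_mul_div, le_div_iff₀ hq]
      linarith
    gcongr
    linarith [le_max_left 1 (log L * L)]
  calc _ ≤ (K + 1) * (log 2 + q / 2) + L + K * log K :=
        abs_log_pPowerPartitions_sub_le hp1 (by omega)
    _ ≤ _ := by linarith [natCast_mul_log_le hq hL hKL]
end

section
/- Fix a prime p. For h ≥ 2, let R^h be the graded polynomial algebra with j generators in degree p^{h+j} for j = 1, ..., h−1 (hence binomial(h,2) generators total). Then log( max over h of dim R^h_{≤n} ) = (2/(75 (log p)^2)) (log n)^3 + O(log log n · (log n)^2). -/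
/-!
A monomial of degree at most `n` is a choice of exponents `a_g ≤ n / deg g` for the
generators `g`; conversely, any choice with `a_g ≤ n / (h² deg g)` works, as `R^h` has fewer
than `h²` generators. Hence, with `L = log_p n`, the `j` generators in degree `p^(h+j)`
contribute `j (L - h - j) log p + O(log L)` to `log dim R^h_{≤n}` as long as `h + j ≤ L`,
and nothing otherwise. Summing over `j` gives `log p · (m k²/2 - k³/3) + O(L² log L)` with
`m = L - h`, `k = min(h, L - h)`, and the maximum over `h` is `2L³/75`, reached at
`h = 2L/5`. Finally `log p · 2L³/75 = 2 (log n)³ / (75 (log p)²)`.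
-/

/-- The number of monomials of total degree at most `n` in the graded polynomial algebra
`R^h` with exactly `j` generators in degree `p^{h+j}` for `j = 1, …, h-1`: generators are
indexed by pairs `(j, t)` with `1 ≤ j ≤ h - 1` and `t < j`, the generator `(j, t)`
having degree `p^{h+j}`. -/
noncomputable def polyCountBeta (p h n : ℕ) : ℕ :=
  Nat.card {a : ℕ × ℕ →₀ ℕ //
    (∀ q ∈ a.support, 1 ≤ q.1 ∧ q.1 ≤ h - 1 ∧ q.2 < q.1) ∧
    (a.sum fun q m => m * p ^ (h + q.1)) ≤ n}

open Finset

section MonomialCount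

variable {ι : Type*}

def monomialsOfDegreeLE (s : Finset ι) (d : ι → ℕ) (n : ℕ) : Set (ι →₀ ℕ) :=
  {a | a.support ⊆ s ∧ (a.sum fun i m => m * d i) ≤ n}

variable {s : Finset ι} {d : ι → ℕ} {n : ℕ}

lemma Finsupp.sum_mul_eq_sum_of_support_subset {a : ι →₀ ℕ} (hs : a.support ⊆ s) :
    (a.sum fun i m => m * d i) = ∑ i ∈ s, a i * d i :=
  Finsupp.sum_of_support_subset a hs _ fun _ _ => zero_mul _

lemma monomialsOfDegreeLE_subset_finsupp (hd : ∀ i ∈ s, 0 < d i) :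
    monomialsOfDegreeLE s d n ⊆ s.finsupp fun i => range (n / d i + 1) := by
  rintro a ⟨hs, hn⟩
  refine mem_finsupp_iff.2 ⟨hs, fun i hi => mem_range_succ_iff.2 ?_⟩
  rw [Nat.le_div_iff_mul_le (hd i hi)]
  calc a i * d i ≤ ∑ j ∈ s, a j * d j := single_le_sum (f := fun j => a j * d j) (by simp) hi
    _ ≤ n := (Finsupp.sum_mul_eq_sum_of_support_subset hs).symm.trans_le hn

lemma finsupp_subset_monomialsOfDegreeLE {c : ℕ} (hc : #s ≤ c) :
    ↑(s.finsupp fun i => range (n / (c * d i) + 1)) ⊆ monomialsOfDegreeLE s d n := by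
  intro a ha
  obtain ⟨hs, ha⟩ := mem_finsupp_iff.1 ha
  refine ⟨hs, ?_⟩
  have hterm : ∀ i ∈ s, a i * d i ≤ n / c := fun i hi => by
    rw [Nat.le_div_iff_mul_le ((card_pos.2 ⟨i, hi⟩).trans_le hc)]
    calc a i * d i * c = a i * (c * d i) := by ring
      _ ≤ n / (c * d i) * (c * d i) := Nat.mul_le_mul_right _ (mem_range_succ_iff.1 (ha i hi))
      _ ≤ n := Nat.div_mul_le_self _ _
  calc (a.sum fun i m => m * d i) = ∑ i ∈ s, a i * d i :=
        Finsupp.sum_mul_eq_sum_of_support_subset hs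
    _ ≤ #s * (n / c) := by simpa using sum_le_card_nsmul s _ _ hterm
    _ ≤ c * (n / c) := Nat.mul_le_mul_right _ hc
    _ ≤ n := Nat.mul_div_le n c

lemma card_monomialsOfDegreeLE_le (hd : ∀ i ∈ s, 0 < d i) :
    Nat.card (monomialsOfDegreeLE s d n) ≤ ∏ i ∈ s, (n / d i + 1) := by
  simpa using Nat.card_mono (finite_toSet _) (monomialsOfDegreeLE_subset_finsupp (n := n) hd)

lemma prod_le_card_monomialsOfDegreeLE (hd : ∀ i ∈ s, 0 < d i) {c : ℕ} (hc : #s ≤ c) :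
    ∏ i ∈ s, (n / (c * d i) + 1) ≤ Nat.card (monomialsOfDegreeLE s d n) := by
  have hfin := (finite_toSet _).subset (monomialsOfDegreeLE_subset_finsupp (n := n) hd)
  simpa using Nat.card_mono hfin (finsupp_subset_monomialsOfDegreeLE hc)

lemma card_monomialsOfDegreeLE_pos (n : ℕ) (hd : ∀ i ∈ s, 0 < d i) :
    0 < Nat.card (monomialsOfDegreeLE s d n) :=
  (prod_pos fun _ _ => Nat.succ_pos _).trans_le (prod_le_card_monomialsOfDegreeLE hd le_rfl)

end MonomialCount

def generatorIndex (h : ℕ) : Finset (ℕ × ℕ) :=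
  (Icc 1 (h - 1) ×ˢ range h).filter fun q => q.2 < q.1

lemma mem_generatorIndex {h : ℕ} {q : ℕ × ℕ} :
    q ∈ generatorIndex h ↔ 1 ≤ q.1 ∧ q.1 ≤ h - 1 ∧ q.2 < q.1 := by
  simp only [generatorIndex, mem_filter, mem_product, mem_Icc, mem_range]
  omega

lemma card_generatorIndex_le (h : ℕ) : #(generatorIndex h) ≤ h ^ 2 :=
  calc #(generatorIndex h) ≤ #(Icc 1 (h - 1) ×ˢ range h) := card_filter_le _ _
    _ ≤ h ^ 2 := by
      rw [card_product, Nat.card_Icc, card_range, sq]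
      exact Nat.mul_le_mul_right _ (by omega)

lemma sum_generatorIndex {M : Type*} [AddCommMonoid M] (h : ℕ) (f : ℕ → M) :
    ∑ q ∈ generatorIndex h, f q.1 = ∑ j ∈ Icc 1 (h - 1), j • f j := by
  rw [generatorIndex, sum_filter, sum_product]
  refine sum_congr rfl fun j hj => ?_
  have hfilter : (range h).filter (fun t => t < j) = range j := by
    ext t; simp only [mem_filter, mem_range, mem_Icc] at hj ⊢; omega
  rw [← sum_filter, hfilter]
  simp

lemma polyCountBeta_eq_card_monomialsOfDegreeLE (p h n : ℕ) :
    polyCountBeta p h n =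
      Nat.card (monomialsOfDegreeLE (generatorIndex h) (fun q => p ^ (h + q.1)) n) :=
  Nat.card_congr <| Equiv.subtypeEquivRight fun a => and_congr_left' <| by
    simp only [mem_generatorIndex, Finset.subset_iff]

open Real

lemma sum_Icc_mul_sub (A B : ℝ) (m : ℕ) :
    ∑ j ∈ Icc 1 m, (j : ℝ) * (A - B * j) =
      A * (m * (m + 1)) / 2 - B * (m * (m + 1) * (2 * m + 1)) / 6 := by
  induction m with
  | zero => simp
  | succ m ih =>
    rw [sum_Icc_succ_top (by omega), ih]
    push_cast
    ring

/- The maximum over the triangle `0 ≤ k ≤ m`, `k + m ≤ l` is attained at `k = 2l/5`,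
`m = 3l/5`: this is where the constant `2/75` comes from. -/
lemma mul_sq_div_two_sub_cube_div_three_le {k m l : ℝ} (hk : 0 ≤ k) (hkm : k ≤ m)
    (hkl : k ≤ l - m) : m * k ^ 2 / 2 - k ^ 3 / 3 ≤ 2 * l ^ 3 / 75 := by
  have hr : 0 ≤ l - m - k := by linarith
  nlinarith [mul_nonneg (sq_nonneg (3 * k - 2 * m)) (by linarith : 0 ≤ 7 * k + (m - k)),
    mul_nonneg (mul_nonneg hr hr) hr, mul_nonneg (mul_nonneg hr (by linarith : 0 ≤ k + m))
      (by linarith : 0 ≤ k + m), mul_nonneg (mul_nonneg hr hr) (by linarith : 0 ≤ k + m)]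

lemma sum_Icc_mul_sub_le {K : ℕ} {μ L : ℝ} (hK : (K : ℝ) + 1 ≤ μ) (hμ : μ ≤ L - K) :
    ∑ j ∈ Icc 1 K, (j : ℝ) * (μ - j) ≤ 2 * L ^ 3 / 75 + (L + 1) * L / 2 := by
  have hmax := mul_sq_div_two_sub_cube_div_three_le (K.cast_nonneg (α := ℝ))
    (by linarith : (K : ℝ) ≤ μ - 1) (by linarith : (K : ℝ) ≤ L - (μ - 1))
  have hclosed := sum_Icc_mul_sub μ 1 K
  simp only [one_mul] at hclosed
  rw [hclosed]
  nlinarith [mul_nonneg (K.cast_nonneg (α := ℝ)) (by linarith : (0 : ℝ) ≤ μ)]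

-- The right-hand side is `∑ j ∈ Icc 1 (x - 1), j * (l - x - j)` (see `sum_Icc_mul_sub`).
lemma two_mul_cube_div_75_sub_three_mul_sq_le {x l : ℝ} (hl : 10 ≤ l)
    (hx1 : 2 * l / 5 - 1 ≤ x) (hx2 : x ≤ 2 * l / 5) :
    2 * l ^ 3 / 75 - 3 * l ^ 2 ≤
      (l - x) * ((x - 1) * x) / 2 - (x - 1) * x * (2 * x - 1) / 6 := by
  have hd : 0 ≤ 2 * l / 5 - x := by linarith
  nlinarith [sq_nonneg (2 * l / 5 - x), mul_nonneg hd (by linarith : (0 : ℝ) ≤ x),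
    mul_nonneg (mul_nonneg hd hd) (by linarith : (0 : ℝ) ≤ l), sq_nonneg x, sq_nonneg l]

lemma sq_le_four_mul_max_one_log_mul_sq {x : ℝ} (hx : 0 ≤ x) :
    x ^ 2 ≤ 4 * max 1 (log x * x ^ 2) := by
  rcases le_or_gt x 2 with hx2 | hx2
  · nlinarith [le_max_left 1 (log x * x ^ 2)]
  · have : 1 / 2 ≤ log x := by
      linarith [log_two_gt_d9, log_le_log two_pos hx2.le]
    nlinarith [le_max_right 1 (log x * x ^ 2), sq_nonneg x]

section LogBounds

variable {p : ℕ}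

lemma log_polyCountBeta_le_sum (hp : 0 < p) (h n : ℕ) :
    log (polyCountBeta p h n) ≤
      ∑ j ∈ Icc 1 (h - 1), (j : ℝ) * log ((n / p ^ (h + j) + 1 : ℕ) : ℝ) := by
  have hd : ∀ q ∈ generatorIndex h, 0 < p ^ (h + q.1) := fun _ _ => by positivity
  rw [polyCountBeta_eq_card_monomialsOfDegreeLE]
  calc log (Nat.card (monomialsOfDegreeLE (generatorIndex h) (fun q => p ^ (h + q.1)) n))
      ≤ log (∏ q ∈ generatorIndex h, (n / p ^ (h + q.1) + 1) : ℕ) :=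
        log_le_log (mod_cast card_monomialsOfDegreeLE_pos n hd)
          (mod_cast card_monomialsOfDegreeLE_le hd)
    _ = _ := by
        rw [Nat.cast_prod, log_prod fun _ _ => by positivity, sum_generatorIndex h
          (fun j => log ((n / p ^ (h + j) + 1 : ℕ) : ℝ))]
        simp only [nsmul_eq_mul]

lemma sum_le_log_polyCountBeta (hp : 0 < p) (h n : ℕ) :
    ∑ j ∈ Icc 1 (h - 1), (j : ℝ) * log ((n / (h ^ 2 * p ^ (h + j)) + 1 : ℕ) : ℝ) ≤
      log (polyCountBeta p h n) := by
  have hd : ∀ q ∈ generatorIndex h, 0 < p ^ (h + q.1) := fun _ _ => by positivity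
  rw [polyCountBeta_eq_card_monomialsOfDegreeLE]
  calc _ = log (∏ q ∈ generatorIndex h, (n / (h ^ 2 * p ^ (h + q.1)) + 1) : ℕ) := by
        rw [Nat.cast_prod, log_prod fun _ _ => by positivity, sum_generatorIndex h
          (fun j => log ((n / (h ^ 2 * p ^ (h + j)) + 1 : ℕ) : ℝ))]
        simp only [nsmul_eq_mul]
    _ ≤ _ := log_le_log (mod_cast prod_pos fun _ _ => Nat.succ_pos _)
        (mod_cast prod_le_card_monomialsOfDegreeLE hd (card_generatorIndex_le h))

lemma log_natDiv_pow_add_one_le_of_pow_le (hp : 2 ≤ p) {n k : ℕ} (hk : p ^ k ≤ n) :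
    log ((n / p ^ k + 1 : ℕ) : ℝ) ≤ log p * (logb p n + 1 - k) := by
  have hq : (1 : ℝ) ≤ (n / p ^ k : ℕ) := mod_cast (Nat.one_le_div_iff (by positivity)).2 hk
  have hn : (0 : ℝ) < n := mod_cast (pow_pos (by omega) k).trans_le hk
  calc log ((n / p ^ k + 1 : ℕ) : ℝ) ≤ log (2 * (n / (p : ℝ) ^ k)) := by
        refine log_le_log (by positivity) ?_
        have : ((n / p ^ k : ℕ) : ℝ) ≤ n / (p : ℝ) ^ k := mod_cast Nat.cast_div_le
        push_cast
        linarith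
    _ = log 2 + log n - k * log p := by
        rw [log_mul two_ne_zero (by positivity), log_div hn.ne' (by positivity), log_pow]
        ring
    _ ≤ log p + log n - k * log p := by
        gcongr
        exact_mod_cast hp
    _ = log p * (logb p n + 1 - k) := by
        rw [logb, mul_sub, mul_add, mul_div_cancel₀ _ (log_pos (by exact_mod_cast hp)).ne']
        ring

lemma log_natDiv_pow_add_one_le (hp : 2 ≤ p) (n k : ℕ) :
    log ((n / p ^ k + 1 : ℕ) : ℝ) ≤
      if k ≤ Nat.log p n then log p * (logb p n + 1 - k) else 0 := by
  by_cases hpow : p ^ k ≤ n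
  · rw [if_pos (Nat.le_log_of_pow_le hp hpow)]
    exact log_natDiv_pow_add_one_le_of_pow_le hp hpow
  · rw [Nat.div_eq_of_lt (not_le.1 hpow), zero_add, Nat.cast_one, log_one]
    split_ifs with hk
    · have : (k : ℝ) ≤ logb p n := (Nat.cast_le.2 hk).trans (natLog_le_logb n p)
      have : 0 < log p := log_pos (by exact_mod_cast hp)
      nlinarith
    · exact le_rfl

lemma log_sub_log_le_log_natDiv_add_one {n m : ℕ} (hn : 0 < n) (hm : 0 < m) :
    log n - log m ≤ log ((n / m + 1 : ℕ) : ℝ) := by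
  rw [← log_div (by positivity) (by positivity)]
  refine log_le_log (by positivity) ?_
  rw [Nat.cast_add, Nat.cast_one, ← Nat.floor_div_eq_div (K := ℝ)]
  exact (Nat.lt_floor_add_one _).le

theorem log_polyCountBeta_le (hp : 2 ≤ p) (h n : ℕ) :
    log (polyCountBeta p h n) ≤
      log p * (2 * logb p n ^ 3 / 75 + (logb p n + 1) * logb p n / 2) := by
  set L := logb p n
  -- the `j ≤ h - 1` with `p ^ (h + j) ≤ n` are exactly those with `j ≤ K`
  set K := min (h - 1) (Nat.log p n - h)
  have hNL : (Nat.log p n : ℝ) ≤ L := natLog_le_logb n p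
  have hsum : ∑ j ∈ Icc 1 K, (j : ℝ) * ((L + 1 - h) - j) ≤
      2 * L ^ 3 / 75 + (L + 1) * L / 2 := by
    rcases K.eq_zero_or_pos with hK | hK
    · have : 0 ≤ L := (Nat.cast_nonneg _).trans hNL
      simp only [hK, Icc_eq_empty_of_lt zero_lt_one, sum_empty]
      positivity
    · have hKN : ((K + h : ℕ) : ℝ) ≤ Nat.log p n :=
        mod_cast (by omega : K + h ≤ Nat.log p n)
      have hKh : ((K + 1 : ℕ) : ℝ) ≤ h := mod_cast (by omega : K + 1 ≤ h)
      push_cast at hKN hKh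
      exact sum_Icc_mul_sub_le (by linarith) (by linarith)
  calc log (polyCountBeta p h n)
      ≤ ∑ j ∈ Icc 1 (h - 1), (j : ℝ) * log ((n / p ^ (h + j) + 1 : ℕ) : ℝ) :=
        log_polyCountBeta_le_sum (by omega) h n
    _ ≤ ∑ j ∈ Icc 1 (h - 1), (j : ℝ) *
          if h + j ≤ Nat.log p n then log p * (L + 1 - (h + j : ℕ)) else 0 :=
        sum_le_sum fun j _ => by gcongr; exact log_natDiv_pow_add_one_le hp n (h + j)
    _ = log p * ∑ j ∈ Icc 1 K, (j : ℝ) * ((L + 1 - h) - j) := by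
        have hfilter : (Icc 1 (h - 1)).filter (h + · ≤ Nat.log p n) = Icc 1 K := by
          ext j; simp only [mem_filter, mem_Icc]; omega
        simp only [mul_ite, mul_zero]
        rw [← sum_filter, hfilter, mul_sum]
        exact sum_congr rfl fun j _ => by push_cast; ring
    _ ≤ log p * (2 * L ^ 3 / 75 + (L + 1) * L / 2) := by gcongr

theorem exists_le_log_polyCountBeta_of_ten_le (hp : 2 ≤ p) {n : ℕ} (hL : 10 ≤ logb p n) :
    ∃ h, 2 ≤ h ∧ log p * (2 * logb p n ^ 3 / 75 - 3 * logb p n ^ 2) -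
      log (logb p n) * logb p n ^ 2 ≤ log (polyCountBeta p h n) := by
  set L := logb p n
  -- the maximiser of `mul_sq_div_two_sub_cube_div_three_le`
  set h := ⌊2 * L / 5⌋₊
  have hlogp : 0 < log p := log_pos (by exact_mod_cast hp)
  have hn : 0 < n := Nat.pos_of_ne_zero fun hn => by simp [L, hn] at hL; linarith
  have hlogn : log n = L * log p := (div_mul_cancel₀ _ hlogp.ne').symm
  have hh4 : 4 ≤ h := Nat.le_floor (by push_cast; linarith)
  have hx2 : (h : ℝ) ≤ 2 * L / 5 := Nat.floor_le (by linarith)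
  have hx1 : 2 * L / 5 - 1 ≤ h := by linarith [Nat.lt_floor_add_one (2 * L / 5)]
  refine ⟨h, by omega, ?_⟩
  have hterm : ∀ j ∈ Icc 1 (h - 1),
      (j : ℝ) * ((log n - 2 * log h - h * log p) - log p * j) ≤
        j * log ((n / (h ^ 2 * p ^ (h + j)) + 1 : ℕ) : ℝ) := by
    intro j _
    gcongr
    calc log n - 2 * log h - h * log p - log p * j
          = log n - log ((h ^ 2 * p ^ (h + j) : ℕ) : ℝ) := by
          push_cast
          rw [log_mul (by positivity) (by positivity), log_pow, log_pow]
          push_cast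
          ring
      _ ≤ _ := log_sub_log_le_log_natDiv_add_one hn (by positivity)
  have hlogh : log h * ((h - 1) * h) ≤ log L * L ^ 2 :=
    mul_le_mul (log_le_log (by positivity) (by linarith)) (by nlinarith) (by nlinarith)
      (log_nonneg (by linarith))
  calc log p * (2 * L ^ 3 / 75 - 3 * L ^ 2) - log L * L ^ 2
      ≤ log p * ((L - h) * ((h - 1) * h) / 2 - (h - 1) * h * (2 * h - 1) / 6) -
          log h * ((h - 1) * h) :=
        sub_le_sub (mul_le_mul_of_nonneg_left
          (two_mul_cube_div_75_sub_three_mul_sq_le hL hx1 hx2) hlogp.le) hlogh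
    _ = ∑ j ∈ Icc 1 (h - 1), (j : ℝ) * ((log n - 2 * log h - h * log p) - log p * j) := by
        rw [sum_Icc_mul_sub, Nat.cast_sub (by omega), hlogn]
        push_cast
        ring
    _ ≤ ∑ j ∈ Icc 1 (h - 1), (j : ℝ) * log ((n / (h ^ 2 * p ^ (h + j)) + 1 : ℕ) : ℝ) :=
        sum_le_sum hterm
    _ ≤ log (polyCountBeta p h n) := sum_le_log_polyCountBeta (by omega) h n

theorem log_polyCountBeta_le_asymptotic (hp : 2 ≤ p) (h n : ℕ) :
    log (polyCountBeta p h n) ≤ 2 / (75 * log p ^ 2) * log n ^ 3 +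
      (2 / log p + 2) * max 1 (log (log n) * log n ^ 2) := by
  have hsq := sq_le_four_mul_max_one_log_mul_sq (log_natCast_nonneg n)
  set E := max 1 (log (log n) * log n ^ 2)
  have hlogp : 0 < log p := log_pos (by exact_mod_cast hp)
  have hE : 1 ≤ E := le_max_left _ _
  have hsq' : log n ^ 2 / (2 * log p) ≤ 2 / log p * E := by
    rw [div_le_iff₀ (by positivity)]
    field_simp
    linarith
  calc log (polyCountBeta p h n)
      ≤ log p * (2 * logb p n ^ 3 / 75 + (logb p n + 1) * logb p n / 2) :=
        log_polyCountBeta_le hp h n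
    _ = 2 / (75 * log p ^ 2) * log n ^ 3 + (log n ^ 2 / (2 * log p) + log n / 2) := by
        rw [logb]
        field_simp
    _ ≤ _ := by nlinarith [sq_nonneg (log n - 1)]

theorem exists_asymptotic_le_log_polyCountBeta (hp : 2 ≤ p) (n : ℕ) :
    ∃ h, 2 ≤ h ∧ 2 / (75 * log p ^ 2) * log n ^ 3 -
      (27 * log p + 12 / log p + (1 + 4 * |log (log p)|) / log p ^ 2) *
        max 1 (log (log n) * log n ^ 2) ≤ log (polyCountBeta p h n) := by
  have hsq := sq_le_four_mul_max_one_log_mul_sq (log_natCast_nonneg n)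
  set E := max 1 (log (log n) * log n ^ 2)
  have hlogp : 0 < log p := log_pos (by exact_mod_cast hp)
  have hE : 1 ≤ E := le_max_left _ _
  have hlog : log (log n) * log n ^ 2 ≤ E := le_max_right _ _
  have hC : 0 ≤ 12 / log p + (1 + 4 * |log (log p)|) / log p ^ 2 := by positivity
  rcases le_or_gt 10 (logb p n) with hL | hL
  · obtain ⟨h, hh, hlow⟩ := exists_le_log_polyCountBeta_of_ten_le hp hL
    refine ⟨h, hh, le_trans ?_ hlow⟩
    have hn : log n ≠ 0 := fun h0 => by simp [logb, h0] at hL; linarith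
    have herr : 3 * log n ^ 2 * log p + (log (log n) - log (log p)) * log n ^ 2 ≤
        (12 * log p + 1 + 4 * |log (log p)|) * E := by
      nlinarith [mul_le_mul_of_nonneg_left hsq hlogp.le, neg_abs_le (log (log p)),
        mul_le_mul_of_nonneg_left hsq (abs_nonneg (log (log p))), sq_nonneg (log n)]
    calc 2 / (75 * log p ^ 2) * log n ^ 3 -
          (27 * log p + 12 / log p + (1 + 4 * |log (log p)|) / log p ^ 2) * E
        ≤ 2 / (75 * log p ^ 2) * log n ^ 3 -
          (3 * log n ^ 2 * log p + (log (log n) - log (log p)) * log n ^ 2) / log p ^ 2 := by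
          have hdiv := div_le_div_of_nonneg_right herr (sq_nonneg (log p))
          have hsplit : (12 * log p + 1 + 4 * |log (log p)|) * E / log p ^ 2 =
              (12 / log p + (1 + 4 * |log (log p)|) / log p ^ 2) * E := by
            field_simp
            ring
          nlinarith [mul_nonneg hlogp.le (zero_le_one.trans hE)]
      _ = _ := by
          rw [logb, log_div hn hlogp.ne']
          field_simp
          ring
  · refine ⟨2, le_rfl, ?_⟩
    have hcube : 2 / (75 * log p ^ 2) * log n ^ 3 ≤ 27 * log p * E := by
      have hℓ : log n ≤ 10 * log p := by
        rw [logb, div_lt_iff₀ hlogp] at hL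
        linarith
      calc 2 / (75 * log p ^ 2) * log n ^ 3 ≤ 2 / (75 * log p ^ 2) * (10 * log p) ^ 3 := by
            gcongr
        _ = 80 / 3 * log p := by field_simp; norm_num
        _ ≤ 27 * log p * E := by nlinarith
    nlinarith [log_natCast_nonneg (polyCountBeta p 2 n), mul_nonneg hC (zero_le_one.trans hE)]

end LogBounds

/-- `log (max over h of dim R^h_{≤n}) = (2/(75 (log p)^2)) (log n)^3
  + O(log log n · (log n)^2)`. -/
theorem stmt8 (p : ℕ) (hp : p.Prime) : ∃ C : ℝ, ∀ n : ℕ, 2 ≤ n →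
    (∀ h : ℕ, 2 ≤ h →
      Real.log (polyCountBeta p h n) ≤
        2 / (75 * (Real.log p) ^ 2) * (Real.log n) ^ 3 +
          C * max 1 (Real.log (Real.log n) * (Real.log n) ^ 2)) ∧
    (∃ h : ℕ, 2 ≤ h ∧
      2 / (75 * (Real.log p) ^ 2) * (Real.log n) ^ 3 -
          C * max 1 (Real.log (Real.log n) * (Real.log n) ^ 2) ≤
        Real.log (polyCountBeta p h n)) := by
  set C₁ := 2 / log p + 2
  set C₂ := 27 * log p + 12 / log p + (1 + 4 * |log (log p)|) / log p ^ 2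
  refine ⟨C₁ + C₂, fun n _ => ?_⟩
  set E := max 1 (log (log n) * log n ^ 2)
  have hC₁ : 0 ≤ C₁ * E := mul_nonneg (by positivity) (zero_le_one.trans (le_max_left _ _))
  have hC₂ : 0 ≤ C₂ * E := mul_nonneg (by positivity) (zero_le_one.trans (le_max_left _ _))
  refine ⟨fun h _ => ?_, ?_⟩
  · linarith [add_mul C₁ C₂ E, log_polyCountBeta_le_asymptotic hp.two_le h n]
  · obtain ⟨h, hh, hlow⟩ := exists_asymptotic_le_log_polyCountBeta hp.two_le n
    exact ⟨h, hh, by linarith [add_mul C₁ C₂ E]⟩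
end

section
/- Let F(t) = Π_{i≥1} (1 − t^{d_i})^{-1} be the generating function of a graded polynomial algebra with generators in degrees d_i, where d_i ≥ c^{-1}·p^i. Then the radius of convergence of F is 1, and the coefficients a_n of F satisfy: for every ε > 0, a_n ≤ exp((1/(2 log p) + ε)(log n)^2) for all sufficiently large n. -/
/-!
A monomial of degree `n` only involves the generators with `d i ≤ n`; as `d i ≥ p^(i+1)/c`,
these are among the first `K ≈ log_p (c n)`, and the exponent of the `i`-th one is at most
`n / d i ≤ c n / p^(i+1)`. Hence `a n ≤ ∏_{i<K} (1 + p) c n / p^(i+1)`, and since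
`∑_{i<K} (L - (i+1) log p) ≤ L² / (2 log p)` for `L = log (c n)`, this gives
`log a n ≤ (log n)² / (2 log p) + O(log n)`. Such growth is subexponential, so `∑ a n rⁿ`
converges for `r < 1`; for `r ≥ 1` the terms at the multiples of `d 0` are at least `1`.
-/

/-- The coefficient `a n` of the generating function `F(t) = ∏ᵢ (1 - t^{dᵢ})⁻¹`, i.e. the
number of monomials of total degree `n` in the polynomial algebra with one generator of
degree `d i` for each `i`. -/
noncomputable def genCoeff (d : ℕ → ℕ) (n : ℕ) : ℕ :=
  Nat.card {a : ℕ →₀ ℕ // (a.sum fun i m => m * d i) = n}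

open Finset Filter Real

abbrev MonomialsOfDegree (d : ℕ → ℕ) (n : ℕ) : Type :=
  {a : ℕ →₀ ℕ // (a.sum fun i m => m * d i) = n}

section Counting

variable {d : ℕ → ℕ}

lemma MonomialsOfDegree.mul_le {n : ℕ} (a : MonomialsOfDegree d n) (i : ℕ) :
    a.1 i * d i ≤ n :=
  calc a.1 i * d i ≤ a.1.sum fun i m => m * d i := by
        simpa using Finsupp.single_le_sum a.1 (g := fun i m => m * d i) (fun _ _ => Nat.zero_le _) i
    _ = n := a.2

lemma MonomialsOfDegree.exists_injective_exponents {n K : ℕ} (hpos : ∀ i, 0 < d i)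
    (hK : ∀ i, K ≤ i → n < d i) :
    ∃ f : MonomialsOfDegree d n → ((i : Fin K) → Fin (n / d i + 1)), Function.Injective f := by
  refine ⟨fun a i => ⟨a.1 i, Nat.lt_succ_of_le ((Nat.le_div_iff_mul_le (hpos i)).2 (a.mul_le i))⟩,
    fun a b hab => Subtype.ext (Finsupp.ext fun i => ?_)⟩
  rcases lt_or_ge i K with hi | hi
  · simpa using congrFun hab ⟨i, hi⟩
  · have vanish (a : MonomialsOfDegree d n) : a.1 i = 0 := by
      by_contra h
      have := Nat.le_mul_of_pos_left (d i) (Nat.pos_of_ne_zero h)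
      have := a.mul_le i
      have := hK i hi
      omega
    rw [vanish a, vanish b]

lemma genCoeff_le_prod_range {n K : ℕ} (hpos : ∀ i, 0 < d i) (hK : ∀ i, K ≤ i → n < d i) :
    genCoeff d n ≤ ∏ i ∈ range K, (n / d i + 1) := by
  obtain ⟨f, hf⟩ := MonomialsOfDegree.exists_injective_exponents hpos hK
  calc genCoeff d n ≤ Nat.card ((i : Fin K) → Fin (n / d i + 1)) :=
        Nat.card_le_card_of_injective f hf
    _ = ∏ i ∈ range K, (n / d i + 1) := by
        simp [Nat.card_eq_fintype_card, Fin.prod_univ_eq_prod_range (fun i => n / d i + 1) K]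

lemma one_le_genCoeff_mul (k j : ℕ) [Finite (MonomialsOfDegree d (k * d j))] :
    1 ≤ genCoeff d (k * d j) :=
  have : Nonempty (MonomialsOfDegree d (k * d j)) :=
    ⟨⟨Finsupp.single j k, by simp [Finsupp.sum_single_index]⟩⟩
  Nat.card_pos

end Counting

lemma sum_range_sub_mul_le {l : ℝ} (hl : 0 < l) (L : ℝ) (K : ℕ) :
    ∑ i ∈ range K, (L - (i + 1) * l) ≤ L ^ 2 / (2 * l) := by
  have closed : ∑ i ∈ range K, (L - (i + 1) * l) = K * L - K * (K + 1) / 2 * l := by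
    induction K with
    | zero => simp
    | succ K ih => rw [sum_range_succ, ih]; push_cast; ring
  rw [closed, le_div_iff₀ (by positivity)]
  nlinarith [sq_nonneg (L - K * l), mul_nonneg hl.le (K.cast_nonneg : (0 : ℝ) ≤ K)]

lemma eventually_mul_add_le_mul_sq {ε : ℝ} (hε : 0 < ε) (A B : ℝ) :
    ∀ᶠ x : ℝ in atTop, A * x + B ≤ ε * x ^ 2 := by
  filter_upwards [eventually_ge_atTop (max 1 ((|A| + |B|) / ε))] with x hx
  have hx1 : 1 ≤ x := le_of_max_le_left hx
  have hAB : |A| + |B| ≤ ε * x := (div_le_iff₀' hε).1 (le_of_max_le_right hx)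
  calc A * x + B ≤ |A| * x + |B| * x := by
        nlinarith [le_abs_self A, le_abs_self B, abs_nonneg B]
    _ = (|A| + |B|) * x := by ring
    _ ≤ ε * x ^ 2 := by nlinarith

lemma eventually_exp_mul_log_sq_le_pow (C : ℝ) {s : ℝ} (hs : 1 < s) :
    ∀ᶠ n : ℕ in atTop, exp (C * log n ^ 2) ≤ s ^ n := by
  have hlittle := ((isLittleO_pow_log_id_atTop (n := 2)).const_mul_left C).bound (log_pos hs)
  filter_upwards [tendsto_natCast_atTop_atTop.eventually hlittle] with n hn
  simp only [norm_eq_abs, id, Nat.abs_cast] at hn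
  calc exp (C * log n ^ 2) ≤ exp (n * log s) :=
        exp_le_exp.2 (by linarith [le_abs_self (C * log n ^ 2)])
    _ = s ^ n := by rw [exp_nat_mul, exp_log (by linarith)]

lemma summable_mul_pow_of_eventually_norm_le_exp {a : ℕ → ℝ} {C : ℝ}
    (ha : ∀ᶠ n in atTop, ‖a n‖ ≤ exp (C * log n ^ 2)) {r : ℝ} (hr0 : 0 ≤ r) (hr : r < 1) :
    Summable fun n => a n * r ^ n := by
  have hs : 1 < 2 / (1 + r) := by rw [lt_div_iff₀ (by linarith)]; linarith
  have hsr : 2 / (1 + r) * r < 1 := by rw [div_mul_eq_mul_div, div_lt_one (by linarith)]; linarith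
  refine (summable_geometric_of_lt_one (by positivity) hsr).of_norm_bounded_eventually_nat ?_
  filter_upwards [ha, eventually_exp_mul_log_sq_le_pow C hs] with n h1 h2
  rw [norm_mul, norm_pow, norm_of_nonneg hr0, mul_pow]
  exact mul_le_mul_of_nonneg_right (h1.trans h2) (by positivity)

lemma not_summable_of_one_le_mul {f : ℕ → ℝ} {m : ℕ} (hm : 0 < m) (hf : ∀ k, 1 ≤ f (k * m)) :
    ¬ Summable f := fun hs =>
  have hsub := hs.tendsto_atTop_zero.comp (strictMono_mul_right_of_pos hm).tendsto_atTop
  let ⟨k, hk⟩ := (hsub.eventually (gt_mem_nhds one_pos)).exists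
  (hf k).not_gt hk

section GrowthBound

variable {p c : ℝ} {d : ℕ → ℕ}

lemma pos_of_pow_div_le (hp : 0 < p) (hc : 0 < c) (hd : ∀ i, p ^ (i + 1) / c ≤ d i) (i : ℕ) :
    0 < d i := by
  exact_mod_cast (div_pos (pow_pos hp _) hc).trans_le (hd i)

lemma lt_of_mul_lt_pow (hp : 1 ≤ p) (hc : 0 < c) (hd : ∀ i, p ^ (i + 1) / c ≤ d i) {n K : ℕ}
    (hK : c * n < p ^ K) (i : ℕ) (hi : K ≤ i) : n < d i := by
  have : (n : ℝ) < d i := calc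
    (n : ℝ) < p ^ K / c := by rw [lt_div_iff₀ hc]; linarith
    _ ≤ p ^ (i + 1) / c := div_le_div_of_nonneg_right (pow_le_pow_right₀ hp (by omega)) hc.le
    _ ≤ d i := hd i
  exact_mod_cast this

lemma finite_monomialsOfDegree (hp : 1 < p) (hc : 0 < c) (hd : ∀ i, p ^ (i + 1) / c ≤ d i)
    (n : ℕ) : Finite (MonomialsOfDegree d n) :=
  let ⟨K, hK⟩ := pow_unbounded_of_one_lt (c * n) hp
  let ⟨f, hf⟩ := MonomialsOfDegree.exists_injective_exponents
    (pos_of_pow_div_le (by linarith) hc hd) (lt_of_mul_lt_pow hp.le hc hd hK)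
  Finite.of_injective f hf

lemma natCast_div_add_one_le_exp (hp : 1 < p) (hc : 0 < c) (hd : ∀ i, p ^ (i + 1) / c ≤ d i)
    {n i : ℕ} (hi : p ^ i ≤ c * n) :
    ((n / d i : ℕ) : ℝ) + 1 ≤ exp (log (1 + p) + (log (c * n) - (i + 1) * log p)) := by
  have hpi : 0 < p ^ (i + 1) := pow_pos (by linarith) _
  have hcn : 0 < c * n := (pow_pos (by linarith) i).trans_le hi
  have hdi : (0 : ℝ) < d i := by exact_mod_cast pos_of_pow_div_le (by linarith) hc hd i
  have hquot : ((n / d i : ℕ) : ℝ) ≤ c * n / p ^ (i + 1) := by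
    refine Nat.cast_div_le.trans ?_
    rw [div_le_div_iff₀ hdi hpi]
    nlinarith [(div_le_iff₀ hc).1 (hd i)]
  have hone : 1 ≤ p * (c * n) / p ^ (i + 1) := by
    rw [le_div_iff₀ hpi, pow_succ]
    nlinarith
  calc ((n / d i : ℕ) : ℝ) + 1 ≤ (1 + p) * (c * n) / p ^ (i + 1) := by
        rw [add_mul, add_div, one_mul]; linarith
    _ = exp (log (1 + p) + (log (c * n) - (i + 1) * log p)) := by
        rw [exp_add, exp_sub, exp_log (by linarith), exp_log hcn, ← Nat.cast_succ, exp_nat_mul,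
          exp_log (by linarith), mul_div_assoc]

theorem genCoeff_le_exp (hp : 1 < p) (hc : 1 ≤ c) (hd : ∀ i, p ^ (i + 1) / c ≤ d i) {n : ℕ}
    (hn : 0 < n) :
    (genCoeff d n : ℝ) ≤
      exp (log (1 + p) * (log (c * n) / log p + 1) + log (c * n) ^ 2 / (2 * log p)) := by
  have hc0 : 0 < c := by linarith
  have hcn : 1 ≤ c * n := one_le_mul_of_one_le_of_one_le hc (by exact_mod_cast hn)
  obtain ⟨k, hk_le, hk_lt⟩ := exists_nat_pow_near hcn hp
  have hsmall (i : ℕ) (hi : i ∈ range (k + 1)) : p ^ i ≤ c * n :=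
    (pow_le_pow_right₀ hp.le (Nat.lt_succ_iff.1 (mem_range.1 hi))).trans hk_le
  have hK : ((k + 1 : ℕ) : ℝ) ≤ log (c * n) / log p + 1 := by
    have hk : (k : ℝ) * log p ≤ log (c * n) := by
      rw [← log_pow]
      exact log_le_log (by positivity) hk_le
    push_cast
    linarith [(le_div_iff₀ (log_pos hp)).2 hk]
  calc (genCoeff d n : ℝ) ≤ ∏ i ∈ range (k + 1), (((n / d i : ℕ) : ℝ) + 1) := by
        exact_mod_cast genCoeff_le_prod_range (pos_of_pow_div_le (by linarith) hc0 hd)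
          (lt_of_mul_lt_pow hp.le hc0 hd hk_lt)
    _ ≤ ∏ i ∈ range (k + 1), exp (log (1 + p) + (log (c * n) - (i + 1) * log p)) :=
        prod_le_prod (fun _ _ => by positivity)
          fun i hi => natCast_div_add_one_le_exp hp hc0 hd (hsmall i hi)
    _ = exp (log (1 + p) * (k + 1 : ℕ)
          + ∑ i ∈ range (k + 1), (log (c * n) - (i + 1) * log p)) := by
        rw [← exp_sum, sum_add_distrib, sum_const, card_range, nsmul_eq_mul, mul_comm]
    _ ≤ _ := exp_le_exp.2 (add_le_add
        (mul_le_mul_of_nonneg_left hK (log_nonneg (by linarith)))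
        (sum_range_sub_mul_le (log_pos hp) _ _))

theorem eventually_genCoeff_le_exp_log_sq (hp : 1 < p) (hc : 1 ≤ c)
    (hd : ∀ i, p ^ (i + 1) / c ≤ d i) {ε : ℝ} (hε : 0 < ε) :
    ∀ᶠ n : ℕ in atTop, (genCoeff d n : ℝ) ≤ exp ((1 / (2 * log p) + ε) * log n ^ 2) := by
  have hlp : 0 < log p := log_pos hp
  set β := log (1 + p)
  set γ := log c
  have hlog : Tendsto (fun n : ℕ => log n) atTop atTop :=
    tendsto_log_atTop.comp tendsto_natCast_atTop_atTop
  filter_upwards [hlog.eventually (eventually_mul_add_le_mul_sq hε ((β + γ) / log p)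
    (β * (γ / log p + 1) + γ ^ 2 / (2 * log p))), eventually_gt_atTop 0] with n hlin hn
  refine (genCoeff_le_exp hp hc hd hn).trans (exp_le_exp.2 ?_)
  have hsplit : β * (log (c * n) / log p + 1) + log (c * n) ^ 2 / (2 * log p) =
      log n ^ 2 / (2 * log p) + ((β + γ) / log p * log n
        + (β * (γ / log p + 1) + γ ^ 2 / (2 * log p))) := by
    rw [log_mul (by linarith) (by positivity)]
    field_simp
    ring
  rw [hsplit, add_mul, one_div_mul_eq_div]
  linarith

end GrowthBound

theorem stmt18_general (p : ℕ) (hp : p.Prime) (c : ℝ) (hc : 1 ≤ c) (d : ℕ → ℕ)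
    (hd : ∀ i : ℕ, ((p : ℝ) ^ (i + 1)) / c ≤ (d i : ℝ)) :
    (∀ r : ℝ, 0 ≤ r → (Summable (fun n => (genCoeff d n : ℝ) * r ^ n) ↔ r < 1)) ∧
    (∀ ε : ℝ, 0 < ε → ∃ N : ℕ, ∀ n : ℕ, N ≤ n →
      (genCoeff d n : ℝ) ≤ Real.exp ((1 / (2 * Real.log p) + ε) * (Real.log n) ^ 2)) := by
  have hp1 : (1 : ℝ) < p := by exact_mod_cast hp.one_lt
  have hc0 : 0 < c := by linarith
  have growth := fun ε (hε : 0 < ε) => eventually_genCoeff_le_exp_log_sq hp1 hc hd hε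
  refine ⟨fun r hr => ⟨fun hs => ?_, fun hr1 => ?_⟩, fun ε hε => eventually_atTop.1 (growth ε hε)⟩
  · by_contra! hr1
    refine not_summable_of_one_le_mul (pos_of_pow_div_le (by linarith) hc0 hd 0) (fun k => ?_) hs
    have := finite_monomialsOfDegree hp1 hc0 hd (k * d 0)
    exact one_le_mul_of_one_le_of_one_le (by exact_mod_cast one_le_genCoeff_mul k 0)
      (one_le_pow₀ hr1)
  · exact summable_mul_pow_of_eventually_norm_le_exp
      ((growth 1 one_pos).mono fun n h => by rwa [norm_natCast]) hr hr1

/-- If `d₁ ≤ d₂ ≤ ⋯` are positive with `dᵢ ≥ p^i / c`, then the generating series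
`F(t) = ∑ aₙ tⁿ` has radius of convergence `1`, and for every `ε > 0` the coefficients
eventually satisfy `aₙ ≤ exp((1/(2 log p) + ε)(log n)^2)`. -/
theorem stmt18 (p : ℕ) (hp : p.Prime) (c : ℝ) (hc : 1 ≤ c) (d : ℕ → ℕ)
    (hpos : ∀ i, 1 ≤ d i) (hmono : Monotone d)
    (hd : ∀ i : ℕ, ((p : ℝ) ^ (i + 1)) / c ≤ (d i : ℝ)) :
    (∀ r : ℝ, 0 ≤ r → (Summable (fun n => (genCoeff d n : ℝ) * r ^ n) ↔ r < 1)) ∧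
    (∀ ε : ℝ, 0 < ε → ∃ N : ℕ, ∀ n : ℕ, N ≤ n →
      (genCoeff d n : ℝ) ≤ Real.exp ((1 / (2 * Real.log p) + ε) * (Real.log n) ^ 2)) :=
  stmt18_general p hp c hc d hd
end
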